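/- For every m ∈ ℕ with m ≥ 1, Σ_{Θ} ∏_{θ ∈ Θ} |θ|^{|θ|−1} = (m+1)^{m−1}, where the sum runs over all partitions Θ of the set {1, …, m} into nonempty blocks and |θ| denotes the cardinality of a block θ. -/

import Mathlib

/-!
Removing the block that contains a fixed element turns the partition sum `S(n)` over an
`n`-element set into the recursion `S(n + 1) = ∑ₖ C(n, k) (1 + k)^k S(n - k)`. The claimed value
`S(n) = 1 · (1 + n)^(n - 1)` solves it because of the case `x = y = 1` of Abel's identity
`∑_{i + j = n} C(n, i) (x + i)^i · y (y + j)^(j - 1) = (x + y + n)^n`, where `y (y + j)^(j - 1)`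
means `1` for `j = 0`. Abel's identity follows by induction on `n`: splitting
`(x + i + 1)^(i + 1) = x (x + i + 1)^i + (i + 1) (x + i + 1)^i` and applying Pascal's rule
expresses the sum at `n + 1` through sums at `n` with `x` or `y` shifted by `1`.
-/

open Finset

section Abel

variable {R : Type*} [CommSemiring R]

def abelPoly (x : R) : ℕ → R
  | 0 => 1
  | k + 1 => x * (x + (k + 1 : ℕ)) ^ k

def abelSum (n : ℕ) (x y : R) : R :=
  ∑ p ∈ antidiagonal n, n.choose p.1 * (x + p.1) ^ p.1 * abelPoly y p.2

lemma abelPoly_one (n : ℕ) : abelPoly (1 : R) n = (n + 1) ^ (n - 1) := by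
  cases n <;> simp [abelPoly, add_comm]

lemma add_pow_succ_eq_abelPoly_add (x : R) (k : ℕ) :
    (x + (k + 1 : ℕ)) ^ (k + 1) =
      abelPoly x (k + 1) + (k + 1 : ℕ) * (x + (k + 1 : ℕ)) ^ k := by
  rw [abelPoly, pow_succ]
  push_cast
  ring

lemma sum_antidiagonal_choose_snd_mul (n : ℕ) (f : ℕ → ℕ → R) :
    ∑ p ∈ antidiagonal n, (n.choose p.2 : R) * f p.1 p.2 =
      ∑ p ∈ antidiagonal n, (n.choose p.1 : R) * f p.1 p.2 :=
  sum_congr rfl fun p hp => by rw [Nat.choose_symm_of_eq_add (mem_antidiagonal.1 hp).symm]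

lemma abelSum_succ_eq_add (n : ℕ) (x y : R) :
    abelSum (n + 1) x y =
      ∑ p ∈ antidiagonal (n + 1), (n + 1).choose p.1 * (abelPoly x p.1 * abelPoly y p.2) +
        (n + 1) * abelSum n (x + 1) y := by
  rw [abelSum, abelSum, Nat.sum_antidiagonal_succ, Nat.sum_antidiagonal_succ, mul_sum, add_assoc,
    ← sum_add_distrib]
  congr 1
  · simp [abelPoly]
  refine sum_congr rfl fun p _ => ?_
  have hchoose : ((n + 1).choose (p.1 + 1) * (p.1 + 1 : ℕ) : R) = (n + 1) * n.choose p.1 := by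
    simpa using congrArg (Nat.cast : ℕ → R) (Nat.add_one_mul_choose_eq n p.1).symm
  rw [add_pow_succ_eq_abelPoly_add, show x + 1 + (p.1 : R) = x + (p.1 + 1 : ℕ) by push_cast; ring]
  calc _ = (n + 1).choose (p.1 + 1) * (abelPoly x (p.1 + 1) * abelPoly y p.2) +
        ((n + 1).choose (p.1 + 1) * (p.1 + 1 : ℕ) : R) *
          ((x + (p.1 + 1 : ℕ)) ^ p.1 * abelPoly y p.2) := by ring
    _ = _ := by rw [hchoose]; ring

lemma sum_antidiagonal_succ_choose_abelPoly_mul_abelPoly (n : ℕ) (x y : R) :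
    ∑ p ∈ antidiagonal (n + 1), (n + 1).choose p.1 * (abelPoly x p.1 * abelPoly y p.2) =
      y * abelSum n (y + 1) x + x * abelSum n (x + 1) y := by
  rw [sum_antidiagonal_choose_succ_mul (fun i j => abelPoly x i * abelPoly y j),
    ← Nat.sum_antidiagonal_swap,
    sum_antidiagonal_choose_snd_mul n (fun i j => abelPoly x (i + 1) * abelPoly y j)]
  simp only [Prod.fst_swap, Prod.snd_swap]
  rw [sum_antidiagonal_choose_snd_mul n (fun i j => abelPoly x j * abelPoly y (i + 1)),
    abelSum, abelSum, mul_sum, mul_sum]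
  congr 1 <;> refine sum_congr rfl fun p _ => ?_ <;> simp only [abelPoly] <;> push_cast <;> ring

theorem abelSum_eq_pow (n : ℕ) (x y : R) : abelSum n x y = (x + y + n) ^ n := by
  induction n generalizing x y with
  | zero => simp [abelSum, abelPoly]
  | succ n ih =>
    rw [abelSum_succ_eq_add, sum_antidiagonal_succ_choose_abelPoly_mul_abelPoly, ih, ih]
    push_cast
    ring

end Abel

def IsSetPartition {α : Type*} [DecidableEq α] (s : Finset α) (Θ : Finset (Finset α)) : Prop :=
  (∀ θ ∈ Θ, θ.Nonempty) ∧ (Θ : Set (Finset α)).PairwiseDisjoint id ∧ Θ.sup id = s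

namespace IsSetPartition

variable {α : Type*} [DecidableEq α] {s θ : Finset α} {Θ : Finset (Finset α)} {a : α}

lemma subset_of_mem (h : IsSetPartition s Θ) (hθ : θ ∈ Θ) : θ ⊆ s :=
  h.2.2 ▸ le_sup (f := id) hθ

lemma exists_mem (h : IsSetPartition s Θ) (ha : a ∈ s) : ∃ θ ∈ Θ, a ∈ θ := by
  rw [← h.2.2] at ha
  simpa using mem_sup.1 ha

lemma filter_mem_eq_singleton (h : IsSetPartition s Θ) (hθ : θ ∈ Θ) (ha : a ∈ θ) :
    {θ' ∈ Θ | a ∈ θ'} = {θ} := by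
  ext θ'
  simp only [mem_filter, mem_singleton]
  constructor
  · rintro ⟨hθ', ha'⟩
    exact h.2.1.elim_finset hθ' hθ a ha' ha
  · rintro rfl
    exact ⟨hθ, ha⟩

lemma erase (h : IsSetPartition s Θ) (hθ : θ ∈ Θ) :
    IsSetPartition (s \ θ) (Θ.erase θ) := by
  obtain ⟨hne, hdisj, hsup⟩ := h
  refine ⟨fun θ' hθ' => hne θ' (mem_of_mem_erase hθ'), hdisj.subset (by simp), ?_⟩
  have hθ_disj : Disjoint θ ((Θ.erase θ).sup id) := Finset.disjoint_sup_right.2 fun θ' hθ' =>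
    hdisj hθ (mem_of_mem_erase hθ') (ne_of_mem_erase hθ').symm
  rw [← hsup, ← insert_erase hθ, sup_insert, id, erase_insert (notMem_erase θ Θ)]
  exact (union_sdiff_cancel_left hθ_disj).symm

lemma insert (h : IsSetPartition (s \ θ) Θ) (hθ : θ.Nonempty) (hθs : θ ⊆ s) :
    IsSetPartition s (insert θ Θ) := by
  obtain ⟨hne, hdisj, hsup⟩ := h
  refine ⟨forall_mem_insert _ _ _ |>.2 ⟨hθ, hne⟩, ?_, ?_⟩
  · rw [coe_insert]
    exact hdisj.insert fun θ' hθ' _ => disjoint_sdiff.mono_right (hsup ▸ le_sup (f := id) hθ')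
  · rw [sup_insert, hsup, id, sup_eq_union, union_sdiff_of_subset hθs]

lemma notMem_of_sdiff (h : IsSetPartition (s \ θ) Θ) (hθ : θ.Nonempty) : θ ∉ Θ := by
  intro hmem
  obtain ⟨a, ha⟩ := hθ
  exact (mem_sdiff.1 (h.subset_of_mem hmem ha)).2 ha

end IsSetPartition

lemma isSetPartition_empty_iff {α : Type*} [DecidableEq α] {Θ : Finset (Finset α)} :
    IsSetPartition ∅ Θ ↔ Θ = ∅ := by
  refine ⟨fun h => eq_empty_of_forall_notMem fun θ hθ => ?_, fun h => by simp [h, IsSetPartition]⟩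
  obtain ⟨a, ha⟩ := h.1 θ hθ
  exact notMem_empty a (h.subset_of_mem hθ ha)

open Classical in
noncomputable def setPartitions {α : Type*} [DecidableEq α] (s : Finset α) :
    Finset (Finset (Finset α)) :=
  {Θ ∈ s.powerset.powerset | IsSetPartition s Θ}

section SetPartitions

variable {α : Type*} [DecidableEq α] {M : Type*} [CommSemiring M] {s θ : Finset α}
  {Θ : Finset (Finset α)} {a : α}

lemma mem_setPartitions : Θ ∈ setPartitions s ↔ IsSetPartition s Θ := by
  classical
  simp only [setPartitions, mem_filter, mem_powerset, and_iff_right_iff_imp]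
  exact fun h θ hθ => mem_powerset.2 (h.subset_of_mem hθ)

lemma setPartitions_empty : setPartitions (∅ : Finset α) = {∅} := by
  ext Θ
  rw [mem_setPartitions, mem_singleton, isSetPartition_empty_iff]

lemma IsSetPartition.prod_eq_sum_mul_prod_erase (h : IsSetPartition s Θ) (ha : a ∈ s)
    (w : Finset α → M) :
    ∏ θ ∈ Θ, w θ = ∑ θ ∈ Θ with a ∈ θ, w θ * ∏ θ' ∈ Θ.erase θ, w θ' := by
  obtain ⟨θ, hθ, haθ⟩ := h.exists_mem ha
  rw [h.filter_mem_eq_singleton hθ haθ, sum_singleton, mul_prod_erase _ _ hθ]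

lemma sum_setPartitions_filter_mem (hθ : θ.Nonempty) (hθs : θ ⊆ s)
    (f : Finset (Finset α) → M) :
    ∑ Θ ∈ setPartitions s with θ ∈ Θ, f (Θ.erase θ) =
      ∑ Θ ∈ setPartitions (s \ θ), f Θ := by
  refine sum_nbij' (·.erase θ) (insert θ ·) ?_ ?_ ?_ ?_ fun _ _ => rfl
  · intro Θ hΘ
    simp only [mem_filter, mem_setPartitions] at hΘ
    exact mem_setPartitions.2 (hΘ.1.erase hΘ.2)
  · intro Θ hΘ
    simp only [mem_setPartitions] at hΘ
    simp only [mem_filter, mem_setPartitions]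
    exact ⟨hΘ.insert hθ hθs, mem_insert_self θ Θ⟩
  · intro Θ hΘ
    exact insert_erase (mem_filter.1 hΘ).2
  · intro Θ hΘ
    exact erase_insert ((mem_setPartitions.1 hΘ).notMem_of_sdiff hθ)

theorem sum_setPartitions_prod_eq (ha : a ∈ s) (w : Finset α → M) :
    ∑ Θ ∈ setPartitions s, ∏ θ ∈ Θ, w θ =
      ∑ θ ∈ s.powerset with a ∈ θ, w θ * ∑ Θ ∈ setPartitions (s \ θ), ∏ θ' ∈ Θ, w θ' := by
  calc ∑ Θ ∈ setPartitions s, ∏ θ ∈ Θ, w θ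
      = ∑ Θ ∈ setPartitions s, ∑ θ ∈ Θ with a ∈ θ, w θ * ∏ θ' ∈ Θ.erase θ, w θ' :=
        sum_congr rfl fun Θ hΘ => (mem_setPartitions.1 hΘ).prod_eq_sum_mul_prod_erase ha w
    _ = ∑ θ ∈ s.powerset with a ∈ θ,
          ∑ Θ ∈ setPartitions s with θ ∈ Θ, w θ * ∏ θ' ∈ Θ.erase θ, w θ' := by
        refine sum_comm' fun Θ θ => ?_
        simp only [mem_filter, mem_powerset, mem_setPartitions]
        exact ⟨fun ⟨h, hθ, haθ⟩ => ⟨⟨h, hθ⟩, h.subset_of_mem hθ, haθ⟩,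
          fun ⟨⟨h, hθ⟩, _, haθ⟩ => ⟨h, hθ, haθ⟩⟩
    _ = _ := sum_congr rfl fun θ hθ => by
        simp only [mem_filter, mem_powerset] at hθ
        rw [← mul_sum, sum_setPartitions_filter_mem ⟨a, hθ.2⟩ hθ.1 fun Θ => ∏ θ' ∈ Θ, w θ']

lemma sum_powerset_insert_filter_mem (ha : a ∉ s) (f : Finset α → M) :
    ∑ t ∈ (insert a s).powerset with a ∈ t, f t = ∑ t ∈ s.powerset, f (insert a t) := by
  rw [sum_filter, sum_powerset_insert ha, sum_eq_zero, zero_add]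
  · exact sum_congr rfl fun t _ => if_pos (mem_insert_self a t)
  · exact fun t ht => if_neg fun hat => ha (mem_powerset.1 ht hat)

theorem sum_setPartitions_insert (ha : a ∉ s) (w : Finset α → M) :
    ∑ Θ ∈ setPartitions (insert a s), ∏ θ ∈ Θ, w θ =
      ∑ t ∈ s.powerset, w (insert a t) * ∑ Θ ∈ setPartitions (s \ t), ∏ θ ∈ Θ, w θ := by
  rw [sum_setPartitions_prod_eq (mem_insert_self a s), sum_powerset_insert_filter_mem ha]
  simp only [insert_sdiff_insert, sdiff_insert_of_notMem ha]

theorem sum_setPartitions_prod_card_pow (s : Finset α) :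
    ∑ Θ ∈ setPartitions s, ∏ θ ∈ Θ, θ.card ^ (θ.card - 1) = abelPoly 1 s.card := by
  induction s using Finset.strongInduction with
  | H s ih =>
  rcases s.eq_empty_or_nonempty with rfl | ⟨a, ha⟩
  · simp [setPartitions_empty, abelPoly]
  rw [← insert_erase ha, sum_setPartitions_insert (notMem_erase a s),
    card_insert_of_notMem (notMem_erase a s)]
  set n := (s.erase a).card
  calc ∑ t ∈ (s.erase a).powerset, (insert a t).card ^ ((insert a t).card - 1) *
        ∑ Θ ∈ setPartitions (s.erase a \ t), ∏ θ ∈ Θ, θ.card ^ (θ.card - 1)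
      = ∑ t ∈ (s.erase a).powerset, (1 + t.card) ^ t.card * abelPoly 1 (n - t.card) := by
        refine sum_congr rfl fun t ht => ?_
        rw [mem_powerset] at ht
        rw [card_insert_of_notMem fun hat => notMem_erase a s (ht hat),
          ih _ (sdiff_subset.trans_ssubset (erase_ssubset ha)), card_sdiff_of_subset ht,
          Nat.add_sub_cancel, add_comm]
    _ = abelSum n 1 1 := by
        rw [sum_powerset_apply_card fun k => (1 + k) ^ k * abelPoly 1 (n - k), abelSum,
          Nat.sum_antidiagonal_eq_sum_range_succ_mk]
        simp only [Nat.cast_id, smul_eq_mul, mul_assoc]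
        rfl
    _ = abelPoly 1 (n + 1) := by
        rw [abelSum_eq_pow, abelPoly]
        push_cast
        ring

end SetPartitions

open Classical in
theorem partition_weight_sum_general
    (m : ℕ) :
    ∑ Θ ∈ Finset.univ.filter (fun Θ : Finset (Finset (Fin m)) =>
        (∀ θ ∈ Θ, θ.Nonempty) ∧
        (Θ : Set (Finset (Fin m))).PairwiseDisjoint id ∧
        Θ.sup id = Finset.univ),
      ∏ θ ∈ Θ, θ.card ^ (θ.card - 1)
    = (m + 1) ^ (m - 1) := by
  have h := sum_setPartitions_prod_card_pow (univ : Finset (Fin m))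
  rw [abelPoly_one, Nat.cast_id, card_univ, Fintype.card_fin] at h
  convert h using 2
  ext Θ
  simp [mem_setPartitions, IsSetPartition]

open Classical in
/-- Summing over all partitions `Θ` of the `m`-element set `Fin m` into
nonempty blocks, `Σ_Θ ∏_{θ ∈ Θ} |θ|^{|θ|-1} = (m+1)^{m-1}`. -/
theorem partition_weight_sum
    (m : ℕ) (hm : 1 ≤ m) :
    ∑ Θ ∈ Finset.univ.filter (fun Θ : Finset (Finset (Fin m)) =>
        (∀ θ ∈ Θ, θ.Nonempty) ∧
        (Θ : Set (Finset (Fin m))).PairwiseDisjoint id ∧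
        Θ.sup id = Finset.univ),
      ∏ θ ∈ Θ, θ.card ^ (θ.card - 1)
    = (m + 1) ^ (m - 1) :=
  partition_weight_sum_general m
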